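/- arXiv:1707.00420 — 6 statements merged into one kernel-verified Lean document; each statement's English description precedes it below -/
import Mathlib

section
/- For any positive reals a₁, …, a_n with n ≥ 2, the arithmetic mean satisfies (1/n)∑ aᵢ ≤ (∏ aᵢ)^{1/n} + ((n−1)/n) · max_{i≠j} |aᵢ − aⱼ|. -/
/-! Let `m` be the smallest `aᵢ` and `D` the largest gap `|aᵢ - aⱼ|`. Every `aᵢ` lies in
`[m, m + D]`, so the arithmetic mean is at most `m + (n - 1) D / n` (the minimum itself contributes
no excess), while the geometric mean of numbers `≥ m ≥ 0` is at least `m`. -/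

open Finset

variable {ι : Type*} [Fintype ι]

theorem Real.le_prod_rpow_one_div_card [Nonempty ι] {a : ι → ℝ} {c : ℝ} (hc : 0 ≤ c)
    (h : ∀ i, c ≤ a i) : c ≤ (∏ i, a i) ^ ((1 : ℝ) / Fintype.card ι) := by
  have hprod : c ^ Fintype.card ι ≤ ∏ i, a i := by
    simpa using Finset.prod_le_prod (s := univ) (fun _ _ => hc) (fun i _ => h i)
  calc c = (c ^ Fintype.card ι) ^ ((Fintype.card ι : ℝ)⁻¹) :=
        (Real.pow_rpow_inv_natCast hc Fintype.card_ne_zero).symm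
    _ ≤ (∏ i, a i) ^ ((1 : ℝ) / Fintype.card ι) := by
        rw [one_div]
        exact Real.rpow_le_rpow (by positivity) hprod (by positivity)

theorem Real.sum_le_card_mul_add_of_sub_le [DecidableEq ι] (a : ι → ℝ) (i₀ : ι) {D : ℝ}
    (h : ∀ i ≠ i₀, a i - a i₀ ≤ D) :
    ∑ i, a i ≤ Fintype.card ι * a i₀ + (Fintype.card ι - 1) * D := by
  have hcard : ((univ.erase i₀).card : ℝ) = Fintype.card ι - 1 := by
    rw [card_erase_of_mem (mem_univ i₀), card_univ,
      Nat.cast_sub (Fintype.card_pos_iff.mpr ⟨i₀⟩), Nat.cast_one]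
  have hrest : ∑ i ∈ univ.erase i₀, a i ≤ ∑ _i ∈ univ.erase i₀, (a i₀ + D) :=
    sum_le_sum fun i hi => by linarith [h i (ne_of_mem_erase hi)]
  rw [sum_const, nsmul_eq_mul, hcard] at hrest
  rw [← add_sum_erase univ a (mem_univ i₀)]
  linarith

theorem stmt_4 (n : ℕ) (hn : 2 ≤ n) (a : Fin n → ℝ) (ha : ∀ i, 0 < a i) :
    (1 / (n : ℝ)) * ∑ i, a i ≤
      (∏ i, a i) ^ ((1 : ℝ) / n) +
        ((n - 1 : ℝ) / n) *
          (Finset.univ.offDiag.sup'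
            ⟨(⟨0, by omega⟩, ⟨1, by omega⟩),
              Finset.mem_offDiag.mpr
                ⟨Finset.mem_univ _, Finset.mem_univ _, by simp [Fin.ext_iff]⟩⟩
            (fun p => |a p.1 - a p.2|)) := by
  set D := Finset.univ.offDiag.sup' _ (fun p : Fin n × Fin n => |a p.1 - a p.2|)
  have : NeZero n := ⟨by omega⟩
  have hgap : ∀ i j, i ≠ j → a i - a j ≤ D := fun i j hij =>
    (le_abs_self _).trans
      (le_sup' (fun p : Fin n × Fin n => |a p.1 - a p.2|) (b := (i, j)) (by simpa using hij))
  obtain ⟨i₀, hmin⟩ := Finite.exists_min a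
  have hsum := Real.sum_le_card_mul_add_of_sub_le a i₀ fun i hi => hgap i i₀ hi
  have hgeom := Real.le_prod_rpow_one_div_card (ha i₀).le hmin
  rw [Fintype.card_fin] at hsum hgeom
  have hn₀ : (0 : ℝ) < n := by positivity
  calc (1 / (n : ℝ)) * ∑ i, a i ≤ (1 / (n : ℝ)) * (n * a i₀ + (n - 1) * D) := by gcongr
    _ = a i₀ + (n - 1) / n * D := by field_simp
    _ ≤ _ := add_le_add_left hgeom _
end

section
/- For any positive reals a₁, …, a_n, the difference between the sum and n times the geometric mean satisfies ∑ aᵢ − n(∏ aᵢ)^{1/n} ≥ (max √aᵢ − min √aᵢ)². -/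
/-!
Replacing two entries `a i`, `a j` by their geometric mean `√(a i * a j)` leaves the product
unchanged and lowers the sum by exactly `(√(a i) - √(a j))²`; AM–GM for the new entries then
gives the bound, applied to the indices of the largest and smallest `√(a i)`.
-/

open Finset Real

theorem Real.card_mul_prod_rpow_one_div_card_le_sum {ι : Type*} (s : Finset ι) {z : ι → ℝ}
    (hz : ∀ i ∈ s, 0 ≤ z i) :
    #s * (∏ i ∈ s, z i) ^ ((1 : ℝ) / #s) ≤ ∑ i ∈ s, z i := by
  obtain rfl | hs := s.eq_empty_or_nonempty
  · simp
  have hcard : (0 : ℝ) < #s := by exact_mod_cast hs.card_pos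
  have h := geom_mean_le_arith_mean s (fun _ ↦ 1) z (fun _ _ ↦ zero_le_one)
    (by simpa using hcard) hz
  simp only [rpow_one, sum_const, nsmul_eq_mul, mul_one, one_mul] at h
  rw [one_div, mul_comm]
  exact (le_div_iff₀ hcard).1 h

theorem Real.sq_sqrt_sub_sqrt_le_sum_sub_card_mul_geom_mean {ι : Type*} [DecidableEq ι]
    {s : Finset ι} {a : ι → ℝ} (ha : ∀ k ∈ s, 0 ≤ a k) {i j : ι} (hi : i ∈ s)
    (hj : j ∈ s) :
    (√(a i) - √(a j)) ^ 2 ≤ ∑ k ∈ s, a k - #s * (∏ k ∈ s, a k) ^ ((1 : ℝ) / #s) := by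
  obtain rfl | hij := eq_or_ne i j
  · simpa using card_mul_prod_rpow_one_div_card_le_sum s ha
  have hjs : j ∈ s.erase i := mem_erase.2 ⟨hij.symm, hj⟩
  set t := (s.erase i).erase j
  set g := √(a i * a j)
  set b : ι → ℝ := fun k ↦ if k = i ∨ k = j then g else a k
  have hb_nonneg : ∀ k ∈ s, 0 ≤ b k := fun k hk ↦ by
    simp only [b]; split_ifs
    exacts [sqrt_nonneg _, ha k hk]
  have hb_eq : ∀ k ∈ t, b k = a k := fun k hk ↦ by
    simp only [t, mem_erase] at hk
    simp [b, hk.1, hk.2.1]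
  have hsum (f : ι → ℝ) : ∑ k ∈ s, f k = f i + f j + ∑ k ∈ t, f k := by
    rw [← add_sum_erase s f hi, ← add_sum_erase _ f hjs, add_assoc]
  have hprod (f : ι → ℝ) : ∏ k ∈ s, f k = f i * f j * ∏ k ∈ t, f k := by
    rw [← mul_prod_erase s f hi, ← mul_prod_erase _ f hjs, mul_assoc]
  have hgap : (√(a i) - √(a j)) ^ 2 = a i + a j - 2 * g := by
    rw [sub_sq, sq_sqrt (ha i hi), sq_sqrt (ha j hj),
      show g = √(a i) * √(a j) from sqrt_mul (ha i hi) _]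
    ring
  have hb_sum : ∑ k ∈ s, b k = ∑ k ∈ s, a k - (√(a i) - √(a j)) ^ 2 := by
    rw [hsum, hsum a, sum_congr rfl hb_eq, hgap]
    simp only [b, true_or, or_true, if_true]
    ring
  have hb_prod : ∏ k ∈ s, b k = ∏ k ∈ s, a k := by
    rw [hprod, hprod a, prod_congr rfl hb_eq]
    simp only [b, true_or, or_true, if_true]
    rw [mul_self_sqrt (mul_nonneg (ha i hi) (ha j hj))]
  have := card_mul_prod_rpow_one_div_card_le_sum s hb_nonneg
  rw [hb_sum, hb_prod] at this
  linarith

theorem stmt_5 (n : ℕ) (hn : 0 < n) (a : Fin n → ℝ) (ha : ∀ i, 0 < a i) :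
    (∑ i, a i) - (n : ℝ) * (∏ i, a i) ^ ((1 : ℝ) / n) ≥
      (Finset.univ.sup' ⟨⟨0, hn⟩, Finset.mem_univ _⟩ (fun i => Real.sqrt (a i)) -
       Finset.univ.inf' ⟨⟨0, hn⟩, Finset.mem_univ _⟩ (fun i => Real.sqrt (a i)))^2 := by
  obtain ⟨M, hM, hM_eq⟩ := exists_mem_eq_sup' ⟨⟨0, hn⟩, mem_univ _⟩ fun i ↦ √(a i)
  obtain ⟨m, hm, hm_eq⟩ := exists_mem_eq_inf' ⟨⟨0, hn⟩, mem_univ _⟩ fun i ↦ √(a i)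
  rw [hM_eq, hm_eq]
  simpa using sq_sqrt_sub_sqrt_le_sum_sub_card_mul_geom_mean (fun k _ ↦ (ha k).le) hM hm
end

section
/- Let λ₁ ≥ ⋯ ≥ λ_k > 0, σ > 0, M ≥ 1, and R ≥ 0. Then the gap (2^{-2R/k}/M)·(∏_{l=1}^k (λ_l+σ²))^{1/k}·( ∑_{l=1}^k λ_l/(λ_l+σ²)² − k(∏_{l=1}^k λ_l/(λ_l+σ²)²)^{1/k} ) is at most (2^{-2R/k}/M) · k · (λ₁+σ²)/(4σ²). -/
/-!
Drop the subtracted geometric-mean term, which is nonnegative. What remains is the geometric mean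
of the `λ_l + σ²` times `∑ λ_l / (λ_l + σ²)²`. The geometric mean is at most its largest factor
`λ₁ + σ²`, and by AM–GM `(x + σ²)² ≥ 4 x σ²` each summand is at most `1 / (4σ²)`.
-/

open Finset

lemma div_add_sq_le_one_div_four_mul (x : ℝ) {s : ℝ} (hs : 0 < s) :
    x / (x + s) ^ 2 ≤ 1 / (4 * s) := by
  rcases le_or_gt x 0 with hx | hx
  · exact (div_nonpos_of_nonpos_of_nonneg hx (sq_nonneg _)).trans (by positivity)
  · rw [div_le_div_iff₀ (by positivity) (by positivity)]
    nlinarith [sq_nonneg (x - s)]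

lemma Real.prod_rpow_one_div_card_le {ι : Type*} {s : Finset ι} (hs : s.Nonempty) {f : ι → ℝ}
    {c : ℝ} (hf : ∀ i ∈ s, 0 ≤ f i) (hfc : ∀ i ∈ s, f i ≤ c) :
    (∏ i ∈ s, f i) ^ ((1 : ℝ) / #s) ≤ c := by
  obtain ⟨i, hi⟩ := hs
  have hc : 0 ≤ c := (hf i hi).trans (hfc i hi)
  have hprod : ∏ i ∈ s, f i ≤ c ^ #s := by
    simpa using prod_le_prod hf hfc
  calc (∏ i ∈ s, f i) ^ ((1 : ℝ) / #s)
      ≤ (c ^ #s) ^ ((1 : ℝ) / #s) := by gcongr; exact prod_nonneg hf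
    _ = c := by rw [one_div, Real.pow_rpow_inv_natCast hc (card_ne_zero_of_mem hi)]

theorem stmt_8_general (σ : ℝ) (hσ : 0 < σ) (k M : ℕ) (hk : 0 < k)
    (R : ℝ) (lam : Fin k → ℝ)
    (hpos : ∀ l, 0 < lam l) (hdesc : ∀ i j : Fin k, i ≤ j → lam j ≤ lam i) :
    (2 : ℝ) ^ (-(2 * R) / k) / M *
      ((∏ l, (lam l + σ^2)) ^ ((1 : ℝ) / k) *
        (∑ l, lam l / (lam l + σ^2)^2 -
          (k : ℝ) * (∏ l, lam l / (lam l + σ^2)^2) ^ ((1 : ℝ) / k))) ≤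
    (2 : ℝ) ^ (-(2 * R) / k) / M * ((k : ℝ) * (lam ⟨0, hk⟩ + σ^2) / (4 * σ^2)) := by
  have hshift : ∀ l, 0 ≤ lam l + σ^2 := fun l => by linarith [hpos l, sq_nonneg σ]
  have hgm : (∏ l, (lam l + σ^2)) ^ ((1 : ℝ) / k) ≤ lam ⟨0, hk⟩ + σ^2 := by
    simpa using Real.prod_rpow_one_div_card_le (f := fun l => lam l + σ^2) ⟨⟨0, hk⟩, mem_univ _⟩
      (fun l _ => hshift l)
      (fun l _ => by linarith [hdesc ⟨0, hk⟩ l (Nat.zero_le _)])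
  have hsum : ∑ l, lam l / (lam l + σ^2)^2 ≤ k * (1 / (4 * σ^2)) := by
    simpa using sum_le_card_nsmul univ _ _
      (fun l _ => div_add_sq_le_one_div_four_mul (lam l) (pow_pos hσ 2))
  have hgm_nonneg : 0 ≤ (∏ l, (lam l + σ^2)) ^ ((1 : ℝ) / k) :=
    Real.rpow_nonneg (prod_nonneg fun l _ => hshift l) _
  have hcorr_nonneg : 0 ≤ (k : ℝ) * (∏ l, lam l / (lam l + σ^2)^2) ^ ((1 : ℝ) / k) :=
    mul_nonneg k.cast_nonneg <| Real.rpow_nonneg (prod_nonneg fun l _ => by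
      have := hpos l; positivity) _
  refine mul_le_mul_of_nonneg_left ?_ (by positivity)
  calc _ ≤ (∏ l, (lam l + σ^2)) ^ ((1 : ℝ) / k) * ∑ l, lam l / (lam l + σ^2)^2 :=
        mul_le_mul_of_nonneg_left (sub_le_self _ hcorr_nonneg) hgm_nonneg
    _ ≤ (lam ⟨0, hk⟩ + σ^2) * (k * (1 / (4 * σ^2))) :=
        mul_le_mul hgm hsum (sum_nonneg fun l _ => by have := hpos l; positivity)
          (hgm_nonneg.trans hgm)
    _ = _ := by ring

theorem stmt_8 (σ : ℝ) (hσ : 0 < σ) (k M : ℕ) (hk : 0 < k) (hM : 1 ≤ M)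
    (R : ℝ) (hR : 0 ≤ R) (lam : Fin k → ℝ)
    (hpos : ∀ l, 0 < lam l) (hdesc : ∀ i j : Fin k, i ≤ j → lam j ≤ lam i) :
    (2 : ℝ) ^ (-(2 * R) / k) / M *
      ((∏ l, (lam l + σ^2)) ^ ((1 : ℝ) / k) *
        (∑ l, lam l / (lam l + σ^2)^2 -
          (k : ℝ) * (∏ l, lam l / (lam l + σ^2)^2) ^ ((1 : ℝ) / k))) ≤
    (2 : ℝ) ^ (-(2 * R) / k) / M * ((k : ℝ) * (lam ⟨0, hk⟩ + σ^2) / (4 * σ^2)) :=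
  stmt_8_general σ hσ k M hk R lam hpos hdesc
end

section
/- Let λ₁ ≥ ⋯ ≥ λ_r > 0 with λ_{r+1} := 0, and define R_k = (1/2)∑_{l=1}^k log₂(λ_l/λ_k) for 1 ≤ k ≤ r (with R_1 = 0) and θ_k(R) = 2^{-2R/k}(∏_{l=1}^k λ_l)^{1/k}. Then for 1 ≤ k < r and R ≥ 0: R_k ≤ R < R_{k+1} if and only if λ_{k+1} < θ_k(R) ≤ λ_k. -/
/-!
Put `ρ_k(x) = (1/2) ∑_{l ≤ k} log₂ (λ_l / x)`, the rate at which the first `k` components are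
reverse water-filled to level `x`. Taking logarithms,
`2 log 2 · ρ_k(x) = ∑_{l ≤ k} log λ_l - k log x` and `k log θ_k(R) = ∑_{l ≤ k} log λ_l - 2 R log 2`,
so `θ_k` is the inverse of the decreasing map `ρ_k`: `θ_k(R) ≤ x ↔ ρ_k(x) ≤ R`. Since
`R_k = ρ_k(λ_k)` and, the new summand `log₂ 1` vanishing, `R_{k+1} = ρ_k(λ_{k+1})`, both halves of
the equivalence follow.
-/

open Finset Real

noncomputable section

namespace WaterFilling

def rateAtLevel (lam : ℕ → ℝ) (k : ℕ) (x : ℝ) : ℝ :=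
  (1 / 2) * ∑ l ∈ Icc 1 k, logb 2 (lam l / x)

def waterLevel (lam : ℕ → ℝ) (k : ℕ) (R : ℝ) : ℝ :=
  (2 : ℝ) ^ (-(2 * R) / k) * (∏ l ∈ Icc 1 k, lam l) ^ ((1 : ℝ) / k)

variable {lam : ℕ → ℝ} {k : ℕ}

theorem two_mul_log_two_mul_rateAtLevel (hpos : ∀ l ∈ Icc 1 k, 0 < lam l) {x : ℝ} (hx : 0 < x) :
    2 * log 2 * rateAtLevel lam k x = ∑ l ∈ Icc 1 k, log (lam l) - k * log x := by
  have hlogb : ∀ l ∈ Icc 1 k, logb 2 (lam l / x) = (log (lam l) - log x) / log 2 := fun l hl ↦ by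
    rw [logb, log_div (hpos l hl).ne' hx.ne']
  rw [rateAtLevel, sum_congr rfl hlogb, ← sum_div, sum_sub_distrib, sum_const, Nat.card_Icc,
    Nat.add_sub_cancel, nsmul_eq_mul]
  field_simp

theorem waterLevel_pos (hpos : ∀ l ∈ Icc 1 k, 0 < lam l) (R : ℝ) : 0 < waterLevel lam k R := by
  have := prod_pos hpos
  unfold waterLevel
  positivity

theorem mul_log_waterLevel (hk : 0 < k) (hpos : ∀ l ∈ Icc 1 k, 0 < lam l) (R : ℝ) :
    k * log (waterLevel lam k R) = ∑ l ∈ Icc 1 k, log (lam l) - 2 * log 2 * R := by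
  have hprod := prod_pos hpos
  have hk' : (k : ℝ) ≠ 0 := by positivity
  rw [waterLevel, log_mul (by positivity) (by positivity), log_rpow two_pos, log_rpow hprod,
    log_prod fun l hl ↦ (hpos l hl).ne']
  field_simp
  ring

theorem waterLevel_le_iff (hk : 0 < k) (hpos : ∀ l ∈ Icc 1 k, 0 < lam l) {x : ℝ} (hx : 0 < x)
    (R : ℝ) : waterLevel lam k R ≤ x ↔ rateAtLevel lam k x ≤ R := by
  have hlog2 : (0 : ℝ) < 2 * log 2 := by positivity
  rw [← log_le_log_iff (waterLevel_pos hpos R) hx,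
    ← mul_le_mul_iff_of_pos_left (show (0 : ℝ) < k by positivity), mul_log_waterLevel hk hpos,
    ← mul_le_mul_iff_of_pos_left hlog2 (b := rateAtLevel lam k x),
    two_mul_log_two_mul_rateAtLevel hpos hx]
  constructor <;> intro h <;> linarith

theorem lt_waterLevel_iff (hk : 0 < k) (hpos : ∀ l ∈ Icc 1 k, 0 < lam l) {x : ℝ} (hx : 0 < x)
    (R : ℝ) : x < waterLevel lam k R ↔ R < rateAtLevel lam k x := by
  simpa only [not_le] using (waterLevel_le_iff hk hpos hx R).not

theorem rateAtLevel_succ_self (h : lam (k + 1) ≠ 0) :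
    rateAtLevel lam (k + 1) (lam (k + 1)) = rateAtLevel lam k (lam (k + 1)) := by
  rw [rateAtLevel, rateAtLevel, sum_Icc_succ_top (by omega), div_self h, logb_one, add_zero]

end WaterFilling

end

open WaterFilling in
theorem stmt_12_general (r : ℕ) (lam : ℕ → ℝ)
    (hpos : ∀ l, 1 ≤ l → l ≤ r → 0 < lam l)
    (Rk : ℕ → ℝ) (hRk : ∀ k, Rk k = (1 / 2) * ∑ l ∈ Finset.Icc 1 k, Real.logb 2 (lam l / lam k))
    (θ : ℕ → ℝ → ℝ)
    (hθ : ∀ k R, θ k R =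
      (2 : ℝ) ^ (-(2 * R) / k) * (∏ l ∈ Finset.Icc 1 k, lam l) ^ ((1 : ℝ) / k)) :
    ∀ k, 1 ≤ k → k < r → ∀ R : ℝ, 0 ≤ R →
      ((Rk k ≤ R ∧ R < Rk (k + 1)) ↔ (lam (k + 1) < θ k R ∧ θ k R ≤ lam k)) := by
  intro k hk hkr R _
  have hposk : ∀ l ∈ Finset.Icc 1 k, 0 < lam l := fun l hl ↦
    hpos l (Finset.mem_Icc.mp hl).1 ((Finset.mem_Icc.mp hl).2.trans hkr.le)
  have hposk1 : 0 < lam (k + 1) := hpos (k + 1) (by omega) hkr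
  have hRate : ∀ m, Rk m = rateAtLevel lam m (lam m) := hRk
  have hLevel : θ k R = waterLevel lam k R := hθ k R
  rw [hRate, hRate, rateAtLevel_succ_self hposk1.ne', hLevel,
    waterLevel_le_iff hk hposk (hposk k (Finset.right_mem_Icc.mpr hk)),
    lt_waterLevel_iff hk hposk hposk1, and_comm]

theorem stmt_12 (r : ℕ) (lam : ℕ → ℝ)
    (hpos : ∀ l, 1 ≤ l → l ≤ r → 0 < lam l)
    (hdesc : ∀ l m, 1 ≤ l → l ≤ m → m ≤ r → lam m ≤ lam l)
    (Rk : ℕ → ℝ) (hRk : ∀ k, Rk k = (1 / 2) * ∑ l ∈ Finset.Icc 1 k, Real.logb 2 (lam l / lam k))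
    (θ : ℕ → ℝ → ℝ)
    (hθ : ∀ k R, θ k R =
      (2 : ℝ) ^ (-(2 * R) / k) * (∏ l ∈ Finset.Icc 1 k, lam l) ^ ((1 : ℝ) / k)) :
    ∀ k, 1 ≤ k → k < r → ∀ R : ℝ, 0 ≤ R →
      ((Rk k ≤ R ∧ R < Rk (k + 1)) ↔ (lam (k + 1) < θ k R ∧ θ k R ≤ lam k)) :=
  stmt_12_general r lam hpos Rk hRk θ hθ
end

section
/- Let σ > 0, λ₁ ≥ λ₂ > 0, and define the function G(R) = (1/2)( √(λ₁/(λ₁+σ²)) · 2^{-R} − √(λ₂/(λ₂+σ²)) )² for R in the interval [R₂(Σ_{X|Y}), R₂(Σ_Y)], where R₂(Σ_{X|Y}) = (1/2)log₂((λ₁(λ₂+σ²))/(λ₂(λ₁+σ²))) and R₂(Σ_Y) = (1/2)log₂((λ₁+σ²)/(λ₂+σ²)). If λ₁/(λ₁+σ²)² ≤ λ₂/(λ₂+σ²)², then G is monotonically increasing on this interval and attains its maximum value (1/2)(λ₂+σ²)( √λ₁/(λ₁+σ²) − √λ₂/(λ₂+σ²) )² at R = R₂(Σ_Y). -/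
/-!
Write `a = √(λ₁/(λ₁+σ²))`, `b = √(λ₂/(λ₂+σ²))`, so `G R = (a 2^(-R) - b)² / 2`. The left end
`R₂(Σ_{X|Y})` of the interval is exactly where `a 2^(-R) = b`; beyond it `a 2^(-R)` decreases
and stays below `b`, so the gap `b - a 2^(-R) ≥ 0` grows and with it `G`. At the right end
`a 2^(-R) = √(λ₂+σ²) · √λ₁/(λ₁+σ²)` and `b = √(λ₂+σ²) · √λ₂/(λ₂+σ²)`, which gives the value.
-/

open Real

lemma Real.rpow_neg_half_mul_logb {b x : ℝ} (b_pos : 0 < b) (b_ne_one : b ≠ 1) (hx : 0 < x) :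
    b ^ (-(1 / 2 * logb b x)) = √x⁻¹ := by
  rw [show -(1 / 2 * logb b x) = logb b x * (-(1 / 2)) by ring, rpow_mul b_pos.le,
    rpow_logb b_pos b_ne_one hx, rpow_neg hx.le, sqrt_eq_rpow, inv_rpow hx.le]

lemma monotoneOn_sq_sub_of_antitoneOn {α : Type*} [Preorder α] {f : α → ℝ} {s : Set α} {c : ℝ}
    (hf : AntitoneOn f s) (hc : ∀ x ∈ s, f x ≤ c) : MonotoneOn (fun x => (f x - c) ^ 2) s := by
  intro x hx y hy hxy
  nlinarith [hf hx hy hxy, hc x hx, hc y hy]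

lemma antitone_mul_rpow_neg {a b : ℝ} (ha : 0 ≤ a) (hb : 1 ≤ b) :
    Antitone fun R : ℝ => a * b ^ (-R) := fun _ _ hxy =>
  mul_le_mul_of_nonneg_left (rpow_le_rpow_of_exponent_le hb (neg_le_neg hxy)) ha

lemma Real.sqrt_div_eq_sqrt_mul_sqrt_div (x : ℝ) {y : ℝ} (hy : 0 < y) :
    √(x / y) = √y * (√x / y) := by
  rw [sqrt_div' x hy.le]
  field_simp
  rw [sq_sqrt hy.le]

lemma sqrt_mul_two_rpow_neg_half_logb_left {lam₁ lam₂ s : ℝ} (h₁ : 0 < lam₁) (h₂ : 0 < lam₂)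
    (hs : 0 ≤ s) :
    √(lam₁ / (lam₁ + s)) * 2 ^ (-(1 / 2 * logb 2 (lam₁ * (lam₂ + s) / (lam₂ * (lam₁ + s))))) =
      √(lam₂ / (lam₂ + s)) := by
  rw [rpow_neg_half_mul_logb two_pos (by norm_num) (by positivity), ← sqrt_mul (by positivity)]
  congr 1
  field_simp

lemma sqrt_mul_two_rpow_neg_half_logb_right {lam₁ lam₂ s : ℝ} (h₁ : 0 < lam₁) (h₂ : 0 < lam₂)
    (hs : 0 ≤ s) :
    √(lam₁ / (lam₁ + s)) * 2 ^ (-(1 / 2 * logb 2 ((lam₁ + s) / (lam₂ + s)))) =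
      √(lam₂ + s) * (√lam₁ / (lam₁ + s)) := by
  have hp₁ : 0 < lam₁ + s := by positivity
  rw [rpow_neg_half_mul_logb two_pos (by norm_num) (by positivity), ← sqrt_mul (by positivity),
    show lam₁ / (lam₁ + s) * ((lam₁ + s) / (lam₂ + s))⁻¹ = (lam₂ + s) * lam₁ / (lam₁ + s) ^ 2 by
      field_simp,
    sqrt_div' _ (sq_nonneg _), sqrt_sq hp₁.le, sqrt_mul (by positivity), mul_div_assoc]

theorem stmt_14_general (σ lam₁ lam₂ : ℝ) (h₂ : 0 < lam₂) (h₁₂ : lam₂ ≤ lam₁) :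
    MonotoneOn
      (fun R : ℝ => (1 / 2) *
        (Real.sqrt (lam₁ / (lam₁ + σ^2)) * (2 : ℝ) ^ (-R) -
          Real.sqrt (lam₂ / (lam₂ + σ^2)))^2)
      (Set.Icc ((1 / 2) * Real.logb 2 ((lam₁ * (lam₂ + σ^2)) / (lam₂ * (lam₁ + σ^2))))
               ((1 / 2) * Real.logb 2 ((lam₁ + σ^2) / (lam₂ + σ^2)))) ∧
    (1 / 2) *
        (Real.sqrt (lam₁ / (lam₁ + σ^2)) *
            (2 : ℝ) ^ (-((1 / 2) * Real.logb 2 ((lam₁ + σ^2) / (lam₂ + σ^2)))) -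
          Real.sqrt (lam₂ / (lam₂ + σ^2)))^2 =
      (1 / 2) * (lam₂ + σ^2) *
        (Real.sqrt lam₁ / (lam₁ + σ^2) - Real.sqrt lam₂ / (lam₂ + σ^2))^2 := by
  have h₁ : 0 < lam₁ := h₂.trans_le h₁₂
  have hs : 0 ≤ σ ^ 2 := sq_nonneg σ
  have hG := antitone_mul_rpow_neg (sqrt_nonneg (lam₁ / (lam₁ + σ ^ 2))) one_le_two
  refine ⟨fun x hx y hy hxy => ?_, ?_⟩
  · have hle (R : ℝ) (hR : 1 / 2 * logb 2 (lam₁ * (lam₂ + σ ^ 2) / (lam₂ * (lam₁ + σ ^ 2))) ≤ R) :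
        √(lam₁ / (lam₁ + σ ^ 2)) * (2 : ℝ) ^ (-R) ≤ √(lam₂ / (lam₂ + σ ^ 2)) :=
      (hG hR).trans_eq (sqrt_mul_two_rpow_neg_half_logb_left h₁ h₂ hs)
    exact mul_le_mul_of_nonneg_left (monotoneOn_sq_sub_of_antitoneOn (hG.antitoneOn _)
      (fun R hR => hle R hR.1) hx hy hxy) one_half_pos.le
  · rw [sqrt_mul_two_rpow_neg_half_logb_right h₁ h₂ hs,
      sqrt_div_eq_sqrt_mul_sqrt_div _ (by positivity : 0 < lam₂ + σ ^ 2), ← mul_sub, mul_pow,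
      sq_sqrt (by positivity)]
    ring

theorem stmt_14 (σ lam₁ lam₂ : ℝ) (hσ : 0 < σ) (h₂ : 0 < lam₂) (h₁₂ : lam₂ ≤ lam₁)
    (hsens : lam₁ / (lam₁ + σ^2)^2 ≤ lam₂ / (lam₂ + σ^2)^2) :
    MonotoneOn
      (fun R : ℝ => (1 / 2) *
        (Real.sqrt (lam₁ / (lam₁ + σ^2)) * (2 : ℝ) ^ (-R) -
          Real.sqrt (lam₂ / (lam₂ + σ^2)))^2)
      (Set.Icc ((1 / 2) * Real.logb 2 ((lam₁ * (lam₂ + σ^2)) / (lam₂ * (lam₁ + σ^2))))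
               ((1 / 2) * Real.logb 2 ((lam₁ + σ^2) / (lam₂ + σ^2)))) ∧
    (1 / 2) *
        (Real.sqrt (lam₁ / (lam₁ + σ^2)) *
            (2 : ℝ) ^ (-((1 / 2) * Real.logb 2 ((lam₁ + σ^2) / (lam₂ + σ^2)))) -
          Real.sqrt (lam₂ / (lam₂ + σ^2)))^2 =
      (1 / 2) * (lam₂ + σ^2) *
        (Real.sqrt lam₁ / (lam₁ + σ^2) - Real.sqrt lam₂ / (lam₂ + σ^2))^2 :=
  stmt_14_general σ lam₁ lam₂ h₂ h₁₂
end

section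
/- Let λ₁ ≥ ⋯ ≥ λ_k > 0, σ > 0, M ≥ 1, R ≥ 0. Then 1 − (1/M)∑_{l=1}^k λ_l/(λ_l+σ²) + (k/M)·2^{-2R/k}(∏_{l=1}^k λ_l/(λ_l+σ²))^{1/k} ≤ 1 − (1/M)∑_{l=1}^k λ_l/(λ_l+σ²) + (2^{-2R/k}/M)(∏_{l=1}^k (λ_l+σ²))^{1/k} ∑_{l=1}^k λ_l/(λ_l+σ²)². -/
/-!
Put `a_l = λ_l / (λ_l + σ²)²`, so that `λ_l / (λ_l + σ²) = a_l (λ_l + σ²)`. The geometric mean of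
the `λ_l / (λ_l + σ²)` therefore factors as `(∏ a_l)^{1/k} (∏ (λ_l + σ²))^{1/k}`, and AM–GM bounds
`k (∏ a_l)^{1/k}` by `∑ a_l`. The common terms of the two sides then cancel.
-/

open Finset

namespace Real

variable {ι : Type*}

theorem card_mul_prod_rpow_one_div_card_le_sum_s16 (s : Finset ι) (z : ι → ℝ)
    (hz : ∀ i ∈ s, 0 ≤ z i) :
    (#s : ℝ) * (∏ i ∈ s, z i) ^ ((1 : ℝ) / #s) ≤ ∑ i ∈ s, z i := by
  rcases s.eq_empty_or_nonempty with rfl | hs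
  · simp
  have hcard : (0 : ℝ) < #s := by exact_mod_cast hs.card_pos
  have amgm := geom_mean_le_arith_mean s (fun _ ↦ 1) z (fun _ _ ↦ zero_le_one)
    (by simpa using hcard) hz
  simp only [rpow_one, sum_const, nsmul_eq_mul, mul_one, one_mul] at amgm
  rw [one_div, mul_comm]
  exact (le_div_iff₀ hcard).mp amgm

theorem card_mul_prod_div_rpow_one_div_card_le (s : Finset ι) (x b : ι → ℝ)
    (hx : ∀ i ∈ s, 0 ≤ x i) (hb : ∀ i ∈ s, 0 < b i) :
    (#s : ℝ) * (∏ i ∈ s, x i / b i) ^ ((1 : ℝ) / #s) ≤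
      (∏ i ∈ s, b i) ^ ((1 : ℝ) / #s) * ∑ i ∈ s, x i / b i ^ 2 := by
  have ha : ∀ i ∈ s, 0 ≤ x i / b i ^ 2 := fun i hi ↦ div_nonneg (hx i hi) (sq_nonneg _)
  have hfactor : ∏ i ∈ s, x i / b i = (∏ i ∈ s, x i / b i ^ 2) * ∏ i ∈ s, b i := by
    rw [← prod_mul_distrib]
    refine prod_congr rfl fun i hi ↦ ?_
    field_simp [(hb i hi).ne']
  rw [hfactor]
  have hB : 0 ≤ ∏ i ∈ s, b i := prod_nonneg fun i hi ↦ (hb i hi).le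
  calc (#s : ℝ) * ((∏ i ∈ s, x i / b i ^ 2) * ∏ i ∈ s, b i) ^ ((1 : ℝ) / #s)
      = (∏ i ∈ s, b i) ^ ((1 : ℝ) / #s) *
          ((#s : ℝ) * (∏ i ∈ s, x i / b i ^ 2) ^ ((1 : ℝ) / #s)) := by
        rw [mul_rpow (prod_nonneg ha) hB]; ring
    _ ≤ (∏ i ∈ s, b i) ^ ((1 : ℝ) / #s) * ∑ i ∈ s, x i / b i ^ 2 :=
        mul_le_mul_of_nonneg_left (card_mul_prod_rpow_one_div_card_le_sum_s16 s _ ha)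
          (rpow_nonneg hB _)

end Real

theorem stmt_16_general (σ : ℝ) (k M : ℕ)
    (R : ℝ) (lam : Fin k → ℝ)
    (hpos : ∀ l, 0 < lam l) :
    1 - (1 / (M : ℝ)) * ∑ l, lam l / (lam l + σ^2) +
        ((k : ℝ) / M) * (2 : ℝ) ^ (-(2 * R) / k) *
          (∏ l, lam l / (lam l + σ^2)) ^ ((1 : ℝ) / k) ≤
      1 - (1 / (M : ℝ)) * ∑ l, lam l / (lam l + σ^2) +
        ((2 : ℝ) ^ (-(2 * R) / k) / M) * (∏ l, (lam l + σ^2)) ^ ((1 : ℝ) / k) *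
          ∑ l, lam l / (lam l + σ^2)^2 := by
  have key := Real.card_mul_prod_div_rpow_one_div_card_le univ lam (fun l ↦ lam l + σ ^ 2)
    (fun l _ ↦ (hpos l).le) (fun l _ ↦ add_pos_of_pos_of_nonneg (hpos l) (sq_nonneg σ))
  rw [card_univ, Fintype.card_fin] at key
  have hscale : (0 : ℝ) ≤ (2 : ℝ) ^ (-(2 * R) / k) / M := by positivity
  refine add_le_add le_rfl ?_
  calc ((k : ℝ) / M) * (2 : ℝ) ^ (-(2 * R) / k) * (∏ l, lam l / (lam l + σ^2)) ^ ((1 : ℝ) / k)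
      = ((2 : ℝ) ^ (-(2 * R) / k) / M) *
          ((k : ℝ) * (∏ l, lam l / (lam l + σ^2)) ^ ((1 : ℝ) / k)) := by ring
    _ ≤ ((2 : ℝ) ^ (-(2 * R) / k) / M) *
          ((∏ l, (lam l + σ^2)) ^ ((1 : ℝ) / k) * ∑ l, lam l / (lam l + σ^2)^2) :=
        mul_le_mul_of_nonneg_left key hscale
    _ = _ := by ring

theorem stmt_16 (σ : ℝ) (hσ : 0 < σ) (k M : ℕ) (hk : 0 < k) (hM : 1 ≤ M)
    (R : ℝ) (hR : 0 ≤ R) (lam : Fin k → ℝ)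
    (hpos : ∀ l, 0 < lam l) (hdesc : ∀ i j : Fin k, i ≤ j → lam j ≤ lam i) :
    1 - (1 / (M : ℝ)) * ∑ l, lam l / (lam l + σ^2) +
        ((k : ℝ) / M) * (2 : ℝ) ^ (-(2 * R) / k) *
          (∏ l, lam l / (lam l + σ^2)) ^ ((1 : ℝ) / k) ≤
      1 - (1 / (M : ℝ)) * ∑ l, lam l / (lam l + σ^2) +
        ((2 : ℝ) ^ (-(2 * R) / k) / M) * (∏ l, (lam l + σ^2)) ^ ((1 : ℝ) / k) *
          ∑ l, lam l / (lam l + σ^2)^2 :=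
  stmt_16_general σ k M R lam hpos
end
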